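/- arXiv:2206.14160 — 3 statements merged into one kernel-verified Lean document; each statement's English description precedes it below -/
import Mathlib

section
/- Let K be the 1d heat kernel. For 0 < s < t, ‖K(t,·) − K(s,·)‖_{L¹(ℝ)} ≤ C min{1, (t−s)/s}; in particular ‖K(t,·)−K(s,·)‖_{L¹} ≤ C (t−s)^α / s^α for any α ∈ (0,1]. -/
/-! For `s ≤ τ ≤ 2s` the time derivative `∂ₜK(τ,x) = K(τ,x) (x²/(4τ²) − 1/(2τ))` is at most
`(8/s) K(4s,x)`: the factor `x²` is absorbed by half of the Gaussian decay, via `(u+1)e⁻ᵘ ≤ 1`.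
Since `∫ K(4s,·) = 1`, the mean value theorem gives `‖K(t,·) − K(s,·)‖₁ ≤ 8(t−s)/s` for `t ≤ 2s`;
for `t > 2s` the crude bound `‖K(t,·)‖₁ + ‖K(s,·)‖₁ = 2` suffices. The Hölder form follows from
`min 1 r ≤ r^α`. -/

open Real MeasureTheory

/-- The one-dimensional heat kernel `K(t,x) = (4πt)^{-1/2} exp(-x²/(4t))`. -/
noncomputable def heatKernel (t x : ℝ) : ℝ :=
    (4 * Real.pi * t) ^ (-(1 : ℝ) / 2) * Real.exp (-x ^ 2 / (4 * t))

lemma heatKernel_nonneg {t : ℝ} (ht : 0 < t) (x : ℝ) : 0 ≤ heatKernel t x := by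
  unfold heatKernel
  positivity

lemma heatKernel_eq_mul_exp_neg_mul_sq (t x : ℝ) :
    heatKernel t x = (4 * π * t) ^ (-(1 : ℝ) / 2) * exp (-(4 * t)⁻¹ * x ^ 2) := by
  rw [heatKernel, div_eq_inv_mul (-x ^ 2), mul_neg, neg_mul]

lemma integrable_heatKernel {t : ℝ} (ht : 0 < t) : Integrable (heatKernel t) := by
  simp_rw [funext (heatKernel_eq_mul_exp_neg_mul_sq t)]
  exact (integrable_exp_neg_mul_sq (by positivity)).const_mul _

lemma integral_heatKernel {t : ℝ} (ht : 0 < t) : ∫ x, heatKernel t x = 1 := by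
  have h4πt : 0 < 4 * π * t := by positivity
  simp_rw [heatKernel_eq_mul_exp_neg_mul_sq t, integral_const_mul, integral_gaussian,
    div_inv_eq_mul, mul_assoc, ← mul_assoc π, mul_comm π 4, ← mul_assoc, sqrt_eq_rpow,
    ← rpow_add h4πt]
  norm_num

lemma integral_abs_heatKernel_sub_le_two {s t : ℝ} (hs : 0 < s) (ht : 0 < t) :
    ∫ x, |heatKernel t x - heatKernel s x| ≤ 2 := by
  have hbound : ∀ x, |heatKernel t x - heatKernel s x| ≤ heatKernel t x + heatKernel s x :=
    fun x => abs_sub_le_iff.2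
      ⟨by linarith [heatKernel_nonneg hs x], by linarith [heatKernel_nonneg ht x]⟩
  calc ∫ x, |heatKernel t x - heatKernel s x|
      ≤ ∫ x, (heatKernel t x + heatKernel s x) :=
        integral_mono ((integrable_heatKernel ht).sub (integrable_heatKernel hs)).abs
          ((integrable_heatKernel ht).add (integrable_heatKernel hs)) hbound
    _ = 2 := by
        rw [integral_add (integrable_heatKernel ht) (integrable_heatKernel hs),
          integral_heatKernel ht, integral_heatKernel hs]
        norm_num

noncomputable def heatKernelTimeDeriv (t x : ℝ) : ℝ :=
  heatKernel t x * (x ^ 2 / (4 * t ^ 2) - 1 / (2 * t))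

lemma hasDerivAt_heatKernel_time (x : ℝ) {τ : ℝ} (hτ : 0 < τ) :
    HasDerivAt (fun t => heatKernel t x) (heatKernelTimeDeriv τ x) τ := by
  have h4πτ : 0 < 4 * π * τ := by positivity
  have hpow : HasDerivAt (fun t : ℝ => (4 * π * t) ^ (-(1 : ℝ) / 2))
      (-(1 : ℝ) / 2 * (4 * π * τ) ^ (-(1 : ℝ) / 2 - 1) * (4 * π)) τ :=
    (hasDerivAt_rpow_const (Or.inl h4πτ.ne')).comp τ
      (by simpa using (hasDerivAt_id' τ).const_mul (4 * π))
  have hexponent : HasDerivAt (fun t : ℝ => -x ^ 2 / (4 * t)) (x ^ 2 / (4 * τ ^ 2)) τ :=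
    ((hasDerivAt_const τ (-x ^ 2)).div ((hasDerivAt_id' τ).const_mul 4)
      (by positivity)).congr_deriv (by field_simp; ring)
  refine (hpow.mul hexponent.exp).congr_deriv ?_
  rw [heatKernelTimeDeriv, heatKernel, rpow_sub h4πτ, rpow_one]
  field_simp
  ring

lemma heatKernel_le_of_le_of_le_two_mul {s τ : ℝ} (hs : 0 < s) (hsτ : s ≤ τ) (hτs : τ ≤ 2 * s)
    (x : ℝ) : heatKernel τ x ≤ (4 * π * s) ^ (-(1 : ℝ) / 2) * exp (-x ^ 2 / (8 * s)) := by
  unfold heatKernel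
  gcongr ?_ * exp ?_
  · exact rpow_le_rpow_of_nonpos (by positivity) (by gcongr) (by norm_num)
  · rw [neg_div, neg_div, neg_le_neg_iff]
    exact div_le_div_of_nonneg_left (sq_nonneg x) (by linarith) (by linarith)

lemma heatKernel_four_mul {s : ℝ} (hs : 0 ≤ s) (x : ℝ) :
    heatKernel (4 * s) x = (4 * π * s) ^ (-(1 : ℝ) / 2) / 2 * exp (-x ^ 2 / (16 * s)) := by
  have h4 : (4 : ℝ) ^ (-(1 : ℝ) / 2) = 1 / 2 := by
    rw [show (4 : ℝ) = 2 ^ (2 : ℝ) by norm_num, ← rpow_mul (by norm_num)]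
    norm_num
  rw [heatKernel, show 4 * π * (4 * s) = 4 * (4 * π * s) by ring,
    mul_rpow (by norm_num) (by positivity), h4, show 4 * (4 * s) = 16 * s by ring]
  ring

lemma exp_neg_two_mul_mul_le (u : ℝ) : exp (-(2 * u)) * (4 * u + 1 / 2) ≤ 4 * exp (-u) := by
  calc exp (-(2 * u)) * (4 * u + 1 / 2) ≤ exp (-u) * exp (-u) * (4 * exp u) := by
        rw [← exp_add, show -u + -u = -(2 * u) by ring]
        gcongr
        linarith [add_one_le_exp u]
    _ = 4 * exp (-u) := by
        rw [exp_neg]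
        field_simp

lemma abs_heatKernelTimeDeriv_le {s τ : ℝ} (hs : 0 < s) (hsτ : s ≤ τ) (hτs : τ ≤ 2 * s)
    (x : ℝ) : |heatKernelTimeDeriv τ x| ≤ 8 / s * heatKernel (4 * s) x := by
  have hτ : 0 < τ := hs.trans_le hsτ
  set u := x ^ 2 / (16 * s) with hu
  have hfactor : |x ^ 2 / (4 * τ ^ 2) - 1 / (2 * τ)| ≤ (4 * u + 1 / 2) / s := by
    have hsq : x ^ 2 / (4 * τ ^ 2) ≤ x ^ 2 / (4 * s ^ 2) := by gcongr
    have hinv : 1 / (2 * τ) ≤ 1 / (2 * s) := by gcongr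
    have hsum : (4 * u + 1 / 2) / s = x ^ 2 / (4 * s ^ 2) + 1 / (2 * s) := by
      rw [hu]; field_simp; ring
    rw [hsum, abs_sub_le_iff]
    constructor <;> linarith [show 0 ≤ x ^ 2 / (4 * τ ^ 2) by positivity,
      show 0 ≤ 1 / (2 * τ) by positivity]
  have hexp : exp (-x ^ 2 / (8 * s)) = exp (-(2 * u)) := by
    rw [hu]; congr 1; field_simp; ring
  calc |heatKernelTimeDeriv τ x|
      = heatKernel τ x * |x ^ 2 / (4 * τ ^ 2) - 1 / (2 * τ)| := by
        rw [heatKernelTimeDeriv, abs_mul, abs_of_nonneg (heatKernel_nonneg hτ x)]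
    _ ≤ (4 * π * s) ^ (-(1 : ℝ) / 2) * exp (-(2 * u)) * ((4 * u + 1 / 2) / s) := by
        rw [← hexp]
        exact mul_le_mul (heatKernel_le_of_le_of_le_two_mul hs hsτ hτs x) hfactor (abs_nonneg _)
          (by positivity)
    _ = (4 * π * s) ^ (-(1 : ℝ) / 2) * (exp (-(2 * u)) * (4 * u + 1 / 2)) / s := by ring
    _ ≤ (4 * π * s) ^ (-(1 : ℝ) / 2) * (4 * exp (-u)) / s := by
        gcongr _ * ?_ / s
        exact exp_neg_two_mul_mul_le u
    _ = 8 / s * heatKernel (4 * s) x := by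
        rw [heatKernel_four_mul hs.le, hu, neg_div (16 * s)]
        ring

lemma abs_heatKernel_sub_le {s t : ℝ} (hs : 0 < s) (hst : s ≤ t) (hts : t ≤ 2 * s) (x : ℝ) :
    |heatKernel t x - heatKernel s x| ≤ 8 / s * heatKernel (4 * s) x * (t - s) := by
  have hmvt := (convex_Icc s t).norm_image_sub_le_of_norm_hasDerivWithin_le
    (fun τ hτ => (hasDerivAt_heatKernel_time x (hs.trans_le hτ.1)).hasDerivWithinAt)
    (fun τ hτ => abs_heatKernelTimeDeriv_le hs hτ.1 (hτ.2.trans hts) x)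
    (Set.left_mem_Icc.2 hst) (Set.right_mem_Icc.2 hst)
  rwa [Real.norm_eq_abs, Real.norm_eq_abs, abs_of_nonneg (sub_nonneg.2 hst)] at hmvt

lemma integral_abs_heatKernel_sub_le_of_le_two_mul {s t : ℝ} (hs : 0 < s) (hst : s ≤ t)
    (hts : t ≤ 2 * s) : ∫ x, |heatKernel t x - heatKernel s x| ≤ 8 * ((t - s) / s) := by
  have h4s : 0 < 4 * s := by positivity
  calc ∫ x, |heatKernel t x - heatKernel s x|
      ≤ ∫ x, 8 / s * heatKernel (4 * s) x * (t - s) :=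
        integral_mono ((integrable_heatKernel (hs.trans_le hst)).sub (integrable_heatKernel hs)).abs
          (((integrable_heatKernel h4s).const_mul _).mul_const _) (abs_heatKernel_sub_le hs hst hts)
    _ = 8 * ((t - s) / s) := by
        rw [integral_mul_const, integral_const_mul, integral_heatKernel h4s]
        ring

lemma integral_abs_heatKernel_sub_le_min {s t : ℝ} (hs : 0 < s) (hst : s ≤ t) :
    ∫ x, |heatKernel t x - heatKernel s x| ≤ 8 * min 1 ((t - s) / s) := by
  rcases le_or_gt t (2 * s) with hts | hts
  · rw [min_eq_right ((div_le_one hs).2 (by linarith))]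
    exact integral_abs_heatKernel_sub_le_of_le_two_mul hs hst hts
  · rw [min_eq_left ((le_div_iff₀ hs).2 (by linarith))]
    linarith [integral_abs_heatKernel_sub_le_two hs (hs.trans_le hst)]

lemma min_one_le_rpow {r α : ℝ} (hr : 0 ≤ r) (hα : 0 ≤ α) (hα1 : α ≤ 1) : min 1 r ≤ r ^ α := by
  rcases le_total r 1 with hr1 | hr1
  · exact (min_le_right _ _).trans (self_le_rpow_of_le_one hr hr1 hα1)
  · exact (min_le_left _ _).trans (one_le_rpow hr1 hα)

/-- There is a universal `C > 0` such that for all `0 < s < t`,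
`‖K(t,·) − K(s,·)‖_{L¹(ℝ)} ≤ C min{1, (t−s)/s}`, and in particular
`‖K(t,·) − K(s,·)‖_{L¹(ℝ)} ≤ C (t−s)^α / s^α` for every `α ∈ (0,1]`. -/
theorem heatKernel_time_difference_L1_bound :
    ∃ C : ℝ, 0 < C ∧ ∀ s t : ℝ, 0 < s → s < t →
      (∫ x : ℝ, |heatKernel t x - heatKernel s x|) ≤ C * min 1 ((t - s) / s) ∧
      ∀ α : ℝ, 0 < α → α ≤ 1 →
        (∫ x : ℝ, |heatKernel t x - heatKernel s x|) ≤ C * (t - s) ^ α / s ^ α := by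
  refine ⟨8, by norm_num, fun s t hs hst => ?_⟩
  have hmin := integral_abs_heatKernel_sub_le_min hs hst.le
  refine ⟨hmin, fun α hα hα1 => ?_⟩
  have hts : 0 ≤ t - s := sub_nonneg.2 hst.le
  calc ∫ x, |heatKernel t x - heatKernel s x|
      ≤ 8 * min 1 ((t - s) / s) := hmin
    _ ≤ 8 * ((t - s) / s) ^ α := by
        gcongr
        exact min_one_le_rpow (div_nonneg hts hs.le) hα.le hα1
    _ = 8 * (t - s) ^ α / s ^ α := by rw [div_rpow hts hs.le, mul_div_assoc]
end

section
/- (Hardy-type inequality) For any nonnegative measurable h : (0,∞) → [0,∞) and p ∈ (1,∞), ∫₀^∞ (∫₀^∞ h(x)/(x+y) dx)^p dy ≤ C_p ∫₀^∞ h(x)^p dx, where one may take C_p = 2^{p-1}(p^p/(p−1)^p + p^p). -/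
/-!
The kernel `1 / (x + y)` is homogeneous of degree `-1`, so Schur's test applies with the test
function `x ^ (-1 / (p q))`, where `q` is the conjugate exponent: Hölder's inequality against the
measure `dx / (x + y)` followed by Tonelli reduces the claim to the kernel bound
`∫₀^∞ x ^ (-1/p) / (x + y) dx ≤ (p + q) y ^ (-1/p)` and its mirror image with `p` and `q`
exchanged, each obtained by splitting the integral at `x = y`. The resulting constant `(p + q) ^ p`
is at most `2 ^ (p - 1) (q ^ p + p ^ p)` by convexity of `t ↦ t ^ p`.
-/

open MeasureTheory ENNReal Set

theorem lintegral_Ioc_ofReal_rpow {c y : ℝ} (hc : -1 < c) (hy : 0 < y) :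
    ∫⁻ x in Ioc 0 y, ENNReal.ofReal x ^ c
      = ENNReal.ofReal (c + 1)⁻¹ * ENNReal.ofReal y ^ (c + 1) := by
  have hint : IntegrableOn (fun x : ℝ => x ^ c) (Ioc 0 y) := by
    simpa [intervalIntegrable_iff_integrableOn_Ioc_of_le hy.le] using
      intervalIntegral.intervalIntegrable_rpow' (a := 0) (b := y) hc
  have hval : ∫ x in Ioc 0 y, x ^ c = (c + 1)⁻¹ * y ^ (c + 1) := by
    rw [← intervalIntegral.integral_of_le hy.le, integral_rpow (Or.inl hc),
      Real.zero_rpow (by linarith), sub_zero, div_eq_inv_mul]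
  calc ∫⁻ x in Ioc 0 y, ENNReal.ofReal x ^ c = ∫⁻ x in Ioc 0 y, ENNReal.ofReal (x ^ c) :=
        setLIntegral_congr_fun measurableSet_Ioc fun x hx => ofReal_rpow_of_pos hx.1
    _ = ENNReal.ofReal (c + 1)⁻¹ * ENNReal.ofReal y ^ (c + 1) := by
        rw [← ofReal_integral_eq_lintegral_ofReal hint
          ((ae_restrict_iff' measurableSet_Ioc).2
            (ae_of_all _ fun x hx => Real.rpow_nonneg hx.1.le c)),
          hval, ENNReal.ofReal_mul (by simp; linarith), ofReal_rpow_of_pos hy]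

theorem lintegral_Ioi_ofReal_rpow {c y : ℝ} (hc : c < -1) (hy : 0 < y) :
    ∫⁻ x in Ioi y, ENNReal.ofReal x ^ c
      = ENNReal.ofReal (-(c + 1))⁻¹ * ENNReal.ofReal y ^ (c + 1) := by
  calc ∫⁻ x in Ioi y, ENNReal.ofReal x ^ c = ∫⁻ x in Ioi y, ENNReal.ofReal (x ^ c) :=
        setLIntegral_congr_fun measurableSet_Ioi fun x hx => ofReal_rpow_of_pos (hy.trans hx)
    _ = ENNReal.ofReal (-(c + 1))⁻¹ * ENNReal.ofReal y ^ (c + 1) := by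
        rw [← ofReal_integral_eq_lintegral_ofReal (integrableOn_Ioi_rpow_of_lt hc hy)
          ((ae_restrict_iff' measurableSet_Ioi).2 (ae_of_all _ fun x hx =>
            Real.rpow_nonneg (hy.trans hx).le c)),
          integral_Ioi_rpow_of_lt hc hy, ofReal_rpow_of_pos hy,
          ← ENNReal.ofReal_mul (by simp; linarith), inv_neg]
        ring_nf

theorem ofReal_rpow_sub_one {x : ℝ} (hx : 0 < x) (c : ℝ) :
    ENNReal.ofReal x ^ (c - 1) = (ENNReal.ofReal x)⁻¹ * ENNReal.ofReal x ^ c := by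
  rw [ENNReal.rpow_sub _ _ (by simpa using hx) ofReal_ne_top, ENNReal.rpow_one, div_eq_mul_inv,
    mul_comm]

theorem lintegral_Ioi_inv_ofReal_add_mul_rpow_le {p q y : ℝ} (hpq : p.HolderConjugate q)
    (hy : 0 < y) :
    ∫⁻ x in Ioi 0, (ENNReal.ofReal (x + y))⁻¹ * ENNReal.ofReal x ^ (-p⁻¹)
      ≤ ENNReal.ofReal (p + q) * ENNReal.ofReal y ^ (-p⁻¹) := by
  have near : ∫⁻ x in Ioc 0 y, (ENNReal.ofReal (x + y))⁻¹ * ENNReal.ofReal x ^ (-p⁻¹)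
      ≤ ENNReal.ofReal q * ENNReal.ofReal y ^ (-p⁻¹) := calc
    _ ≤ ∫⁻ x in Ioc 0 y, (ENNReal.ofReal y)⁻¹ * ENNReal.ofReal x ^ (-p⁻¹) :=
        setLIntegral_mono' measurableSet_Ioc fun x hx => by gcongr; linarith [hx.1]
    _ = ENNReal.ofReal q * ENNReal.ofReal y ^ (-p⁻¹) := by
        rw [lintegral_const_mul' _ _ (by simpa using hy),
          lintegral_Ioc_ofReal_rpow (by linarith [inv_lt_one_of_one_lt₀ hpq.lt]) hy,
          neg_add_eq_sub, hpq.one_sub_inv, inv_inv, ← hpq.symm.inv_sub_one, ofReal_rpow_sub_one hy]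
        ring
  have far : ∫⁻ x in Ioi y, (ENNReal.ofReal (x + y))⁻¹ * ENNReal.ofReal x ^ (-p⁻¹)
      ≤ ENNReal.ofReal p * ENNReal.ofReal y ^ (-p⁻¹) := calc
    _ ≤ ∫⁻ x in Ioi y, ENNReal.ofReal x ^ (-p⁻¹ - 1) :=
        setLIntegral_mono' measurableSet_Ioi fun x hx => by
          rw [ofReal_rpow_sub_one (hy.trans hx)]
          gcongr
          linarith
    _ = ENNReal.ofReal p * ENNReal.ofReal y ^ (-p⁻¹) := by
        rw [lintegral_Ioi_ofReal_rpow (by linarith [hpq.inv_pos]) hy, sub_add_cancel, neg_neg,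
          inv_inv]
  calc _ = _ + _ := by
        rw [← Ioc_union_Ioi_eq_Ioi hy.le, lintegral_union measurableSet_Ioi Ioc_disjoint_Ioi_same]
    _ ≤ ENNReal.ofReal q * ENNReal.ofReal y ^ (-p⁻¹)
          + ENNReal.ofReal p * ENNReal.ofReal y ^ (-p⁻¹) := add_le_add near far
    _ = ENNReal.ofReal (p + q) * ENNReal.ofReal y ^ (-p⁻¹) := by
        rw [ENNReal.ofReal_add hpq.nonneg hpq.symm.nonneg, add_mul, add_comm]

section Schur

variable {α β : Type*} [MeasurableSpace α] [MeasurableSpace β] {p q : ℝ}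

theorem lintegral_rpow_le_lintegral_mul_inv_rpow_mul_lintegral_rpow {μ : Measure α}
    (hpq : p.HolderConjugate q) {f u : α → ℝ≥0∞} (hf : AEMeasurable f μ) (hu : AEMeasurable u μ)
    (hu0 : ∀ᵐ x ∂μ, u x ≠ 0) (hutop : ∀ᵐ x ∂μ, u x ≠ ∞) :
    (∫⁻ x, f x ∂μ) ^ p ≤ (∫⁻ x, f x ^ p * (u x)⁻¹ ^ p ∂μ) * (∫⁻ x, u x ^ q ∂μ) ^ (p / q) := by
  have hsplit : ∫⁻ x, f x ∂μ = ∫⁻ x, ((f * u⁻¹) * u) x ∂μ :=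
    lintegral_congr_ae <| by
      filter_upwards [hu0, hutop] with x h0 htop
      simp [mul_assoc, ENNReal.inv_mul_cancel h0 htop]
  calc (∫⁻ x, f x ∂μ) ^ p
      ≤ ((∫⁻ x, (f * u⁻¹) x ^ p ∂μ) ^ (1 / p) * (∫⁻ x, u x ^ q ∂μ) ^ (1 / q)) ^ p := by
        rw [hsplit]
        exact ENNReal.rpow_le_rpow (ENNReal.lintegral_mul_le_Lp_mul_Lq μ hpq (hf.mul hu.inv) hu)
          hpq.nonneg
    _ = (∫⁻ x, f x ^ p * (u x)⁻¹ ^ p ∂μ) * (∫⁻ x, u x ^ q ∂μ) ^ (p / q) := by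
        simp only [Pi.mul_apply, Pi.inv_apply, ENNReal.mul_rpow_of_nonneg _ _ hpq.nonneg,
          ← ENNReal.rpow_mul, one_div_mul_cancel hpq.ne_zero, ENNReal.rpow_one, one_div_mul_eq_div]

variable {μ : Measure α} {ν : Measure β} [SFinite μ] [SFinite ν]

theorem lintegral_rpow_lintegral_mul_le_of_schur_test (hpq : p.HolderConjugate q)
    {K : α → β → ℝ≥0∞} (hK : Measurable (Function.uncurry K)) {u : α → ℝ≥0∞} {v : β → ℝ≥0∞}
    (hu : Measurable u) (hv : Measurable v) (hu0 : ∀ᵐ x ∂μ, u x ≠ 0) (hutop : ∀ᵐ x ∂μ, u x ≠ ∞)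
    {A B : ℝ≥0∞} (hA : ∀ᵐ y ∂ν, ∫⁻ x, K x y * u x ^ q ∂μ ≤ A * v y ^ q)
    (hB : ∀ᵐ x ∂μ, ∫⁻ y, K x y * v y ^ p ∂ν ≤ B * u x ^ p) {f : α → ℝ≥0∞} (hf : Measurable f) :
    ∫⁻ y, (∫⁻ x, K x y * f x ∂μ) ^ p ∂ν ≤ A ^ (p / q) * B * ∫⁻ x, f x ^ p ∂μ := by
  let g : α → ℝ≥0∞ := fun x => f x ^ p * (u x)⁻¹ ^ p
  have hg : Measurable g := by fun_prop
  have pointwise : ∀ᵐ y ∂ν,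
      (∫⁻ x, K x y * f x ∂μ) ^ p ≤ A ^ (p / q) * (v y ^ p * ∫⁻ x, K x y * g x ∂μ) := by
    filter_upwards [hA] with y hAy
    have hKy : Measurable (K · y) := hK.of_uncurry_right
    have hac : μ.withDensity (K · y) ≪ μ := withDensity_absolutelyContinuous _ _
    have holder := lintegral_rpow_le_lintegral_mul_inv_rpow_mul_lintegral_rpow
      (μ := μ.withDensity (K · y)) hpq hf.aemeasurable hu.aemeasurable (hac.ae_le hu0)
      (hac.ae_le hutop)
    change _ ≤ (∫⁻ x, g x ∂_) * _ at holder
    simp only [lintegral_withDensity_eq_lintegral_mul _ hKy hf,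
      lintegral_withDensity_eq_lintegral_mul _ hKy hg,
      lintegral_withDensity_eq_lintegral_mul _ hKy (hu.pow_const q), Pi.mul_apply] at holder
    calc (∫⁻ x, K x y * f x ∂μ) ^ p
        ≤ (∫⁻ x, K x y * g x ∂μ) * (∫⁻ x, K x y * u x ^ q ∂μ) ^ (p / q) := holder
      _ ≤ (∫⁻ x, K x y * g x ∂μ) * (A * v y ^ q) ^ (p / q) := by
          gcongr
          exact div_nonneg hpq.nonneg hpq.symm.nonneg
      _ = A ^ (p / q) * (v y ^ p * ∫⁻ x, K x y * g x ∂μ) := by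
          rw [ENNReal.mul_rpow_of_nonneg _ _ (div_nonneg hpq.nonneg hpq.symm.nonneg),
            ← ENNReal.rpow_mul, mul_div_cancel₀ _ hpq.symm.ne_zero]
          ring
  have hBg : ∀ᵐ x ∂μ, g x * ∫⁻ y, K x y * v y ^ p ∂ν ≤ B * f x ^ p := by
    filter_upwards [hB, hu0, hutop] with x hBx h0 htop
    calc g x * ∫⁻ y, K x y * v y ^ p ∂ν ≤ g x * (B * u x ^ p) := by gcongr
      _ = B * f x ^ p * ((u x)⁻¹ * u x) ^ p := by
          rw [ENNReal.mul_rpow_of_nonneg _ _ hpq.nonneg]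
          ring
      _ = B * f x ^ p := by
          rw [ENNReal.inv_mul_cancel h0 htop, ENNReal.one_rpow, mul_one]
  calc ∫⁻ y, (∫⁻ x, K x y * f x ∂μ) ^ p ∂ν
      ≤ ∫⁻ y, A ^ (p / q) * (v y ^ p * ∫⁻ x, K x y * g x ∂μ) ∂ν := lintegral_mono_ae pointwise
    _ = A ^ (p / q) * ∫⁻ y, ∫⁻ x, v y ^ p * (K x y * g x) ∂μ ∂ν := by
        rw [lintegral_const_mul _ (by fun_prop)]
        congr 1
        refine lintegral_congr fun y => ?_
        rw [lintegral_const_mul _ (by fun_prop)]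
    _ = A ^ (p / q) * ∫⁻ x, g x * ∫⁻ y, K x y * v y ^ p ∂ν ∂μ := by
        rw [← lintegral_lintegral_swap (by fun_prop)]
        congr 1
        refine lintegral_congr fun x => ?_
        rw [← lintegral_const_mul _ (by fun_prop)]
        congr 1 with y
        ring
    _ ≤ A ^ (p / q) * ∫⁻ x, B * f x ^ p ∂μ := by gcongr 1; exact lintegral_mono_ae hBg
    _ = A ^ (p / q) * B * ∫⁻ x, f x ^ p ∂μ := by
        rw [lintegral_const_mul _ (hf.pow_const p), mul_assoc]

end Schur

theorem ae_restrict_Ioi_lintegral_inv_ofReal_add_mul_rpow_le {p q : ℝ}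
    (hpq : p.HolderConjugate q) :
    ∀ᵐ y ∂volume.restrict (Ioi (0 : ℝ)),
      ∫⁻ x in Ioi 0, (ENNReal.ofReal (x + y))⁻¹ * (ENNReal.ofReal x ^ (-(p * q)⁻¹)) ^ q
        ≤ ENNReal.ofReal (p + q) * (ENNReal.ofReal y ^ (-(p * q)⁻¹)) ^ q := by
  filter_upwards [ae_restrict_mem measurableSet_Ioi] with y hy
  have hexp : -(p * q)⁻¹ * q = -p⁻¹ := by field_simp [hpq.symm.ne_zero]
  simpa only [← ENNReal.rpow_mul, hexp] using lintegral_Ioi_inv_ofReal_add_mul_rpow_le hpq hy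

theorem ofReal_add_rpow_div_mul_ofReal_add_le {p q : ℝ} (hpq : p.HolderConjugate q) :
    ENNReal.ofReal (p + q) ^ (p / q) * ENNReal.ofReal (p + q)
      ≤ ENNReal.ofReal (2 ^ (p - 1) * (p ^ p / (p - 1) ^ p + p ^ p)) := by
  calc ENNReal.ofReal (p + q) ^ (p / q) * ENNReal.ofReal (p + q)
      = (ENNReal.ofReal q + ENNReal.ofReal p) ^ p := by
        nth_rw 2 [← ENNReal.rpow_one (ENNReal.ofReal (p + q))]
        rw [← ENNReal.rpow_add_of_nonneg _ _ (div_nonneg hpq.nonneg hpq.symm.nonneg) zero_le_one,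
          hpq.div_conj_eq_sub_one, sub_add_cancel, add_comm,
          ENNReal.ofReal_add hpq.symm.nonneg hpq.nonneg]
    _ ≤ 2 ^ (p - 1) * (ENNReal.ofReal q ^ p + ENNReal.ofReal p ^ p) :=
        ENNReal.rpow_add_le_mul_rpow_add_rpow _ _ hpq.lt.le
    _ = ENNReal.ofReal (2 ^ (p - 1) * (p ^ p / (p - 1) ^ p + p ^ p)) := by
        rw [ENNReal.ofReal_rpow_of_nonneg hpq.symm.nonneg hpq.nonneg,
          ENNReal.ofReal_rpow_of_nonneg hpq.nonneg hpq.nonneg, hpq.conjugate_eq,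
          Real.div_rpow hpq.nonneg hpq.sub_one_pos.le,
          ← ENNReal.ofReal_add (div_nonneg (Real.rpow_nonneg hpq.nonneg _)
            (Real.rpow_nonneg hpq.sub_one_pos.le _)) (Real.rpow_nonneg hpq.nonneg _),
          ENNReal.ofReal_mul (by positivity),
          ← ENNReal.ofReal_rpow_of_nonneg zero_le_two hpq.sub_one_pos.le, ENNReal.ofReal_ofNat]

/-- Hardy-type inequality: for nonnegative measurable `h` on `(0,∞)` and `p ∈ (1,∞)`,
`∫₀^∞ (∫₀^∞ h(x)/(x+y) dx)^p dy ≤ C_p ∫₀^∞ h(x)^p dx` with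
`C_p = 2^{p-1}(p^p/(p-1)^p + p^p)`. -/
theorem hardy_type_inequality (h : ℝ → ℝ≥0∞) (hmeas : Measurable h) (p : ℝ) (hp : 1 < p) :
    ∫⁻ y in Set.Ioi (0 : ℝ), (∫⁻ x in Set.Ioi (0 : ℝ), h x / ENNReal.ofReal (x + y)) ^ p
      ≤ ENNReal.ofReal (2 ^ (p - 1) * (p ^ p / (p - 1) ^ p + p ^ p)) *
        ∫⁻ x in Set.Ioi (0 : ℝ), (h x) ^ p := by
  set q := p.conjExponent
  have hpq : p.HolderConjugate q := .conjExponent hp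
  have hpos : ∀ᵐ x ∂volume.restrict (Ioi (0 : ℝ)), 0 < ENNReal.ofReal x :=
    (ae_restrict_mem measurableSet_Ioi).mono fun _ hx => ENNReal.ofReal_pos.2 hx
  calc ∫⁻ y in Ioi 0, (∫⁻ x in Ioi 0, h x / ENNReal.ofReal (x + y)) ^ p
      = ∫⁻ y in Ioi 0, (∫⁻ x in Ioi 0, (ENNReal.ofReal (x + y))⁻¹ * h x) ^ p := by
        simp only [div_eq_mul_inv, mul_comm (h _)]
    _ ≤ ENNReal.ofReal (p + q) ^ (p / q) * ENNReal.ofReal (p + q) * ∫⁻ x in Ioi 0, h x ^ p :=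
        lintegral_rpow_lintegral_mul_le_of_schur_test hpq (by fun_prop)
          (u := fun x => ENNReal.ofReal x ^ (-(p * q)⁻¹))
          (v := fun y => ENNReal.ofReal y ^ (-(p * q)⁻¹)) (by fun_prop) (by fun_prop)
          (hpos.mono fun _ hx => (ENNReal.rpow_pos hx ofReal_ne_top).ne')
          (hpos.mono fun _ hx => ENNReal.rpow_ne_top_of_ne_zero hx.ne' ofReal_ne_top)
          (ae_restrict_Ioi_lintegral_inv_ofReal_add_mul_rpow_le hpq)
          (by simpa only [mul_comm q p, add_comm]
            using ae_restrict_Ioi_lintegral_inv_ofReal_add_mul_rpow_le hpq.symm)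
          hmeas
    _ ≤ ENNReal.ofReal (2 ^ (p - 1) * (p ^ p / (p - 1) ^ p + p ^ p))
          * ∫⁻ x in Ioi 0, h x ^ p := by
        gcongr
        exact ofReal_add_rpow_div_mul_ofReal_add_le hpq
end

section
/- For any 0 < σ, α with σ + α < 1, and any 0 < s, the integral ∫₀^s min{1, a/(s−τ)} (s−τ)^{α−1} τ^{−σ−α} dτ ≤ C a^α s^{−σ−α} holds for all a > 0, where C depends only on σ, α. -/
/-!
Split the time interval at `τ = s / 2`. Away from the diagonal `min 1 x ≤ x ^ α` bounds the
kernel `min 1 (a / u) * u ^ (α - 1)` by `a ^ α / u ≤ 2 a ^ α / s`, leaving the integrable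
singularity `τ ^ (-σ - α)`. Near the diagonal `τ ^ (-σ - α) ≤ (s / 2) ^ (-σ - α)`, and the kernel
has total mass `a ^ α (1 / α + 1 / (1 - α))` on `(0, ∞)`: it is `u ^ (α - 1)` below `u = a` and
`a u ^ (α - 2)` above. The two bounds are added pointwise, so the integral is never split.
-/

open MeasureTheory Set

lemma min_one_le_rpow_s9 {x β : ℝ} (hx : 0 < x) (hβ₀ : 0 ≤ β) (hβ₁ : β ≤ 1) :
    min 1 x ≤ x ^ β := by
  rcases le_total x 1 with h | h
  · calc min 1 x = x ^ (1 : ℝ) := by rw [min_eq_right h, Real.rpow_one]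
      _ ≤ x ^ β := Real.rpow_le_rpow_of_exponent_ge hx h hβ₁
  · exact (min_le_left 1 x).trans (Real.one_le_rpow h hβ₀)

lemma setIntegral_Ioo_rpow {γ s : ℝ} (hγ : -1 < γ) (hs : 0 ≤ s) :
    ∫ τ in Ioo 0 s, τ ^ γ = s ^ (γ + 1) / (γ + 1) := by
  rw [← integral_Ioc_eq_integral_Ioo, ← intervalIntegral.integral_of_le hs,
    integral_rpow (Or.inl hγ), Real.zero_rpow (by linarith), sub_zero]

lemma setIntegral_Ioo_comp_sub_left {E : Type*} [NormedAddCommGroup E] [NormedSpace ℝ E]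
    (f : ℝ → E) {s : ℝ} (hs : 0 ≤ s) :
    ∫ τ in Ioo 0 s, f (s - τ) = ∫ u in Ioo 0 s, f u := by
  simp only [← integral_Ioc_eq_integral_Ioo, ← intervalIntegral.integral_of_le hs,
    intervalIntegral.integral_comp_sub_left, sub_self, sub_zero]

lemma IntegrableOn.comp_sub_left_Ioo {E : Type*} [NormedAddCommGroup E] {f : ℝ → E} {s : ℝ}
    (hs : 0 ≤ s) (hf : IntegrableOn f (Ioo 0 s)) : IntegrableOn (fun τ ↦ f (s - τ)) (Ioo 0 s) := by
  rw [← intervalIntegrable_iff_integrableOn_Ioo_of_le hs] at hf ⊢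
  simpa only [sub_self, sub_zero] using (hf.comp_sub_left s).symm

section Kernel

variable {a α u s τ γ : ℝ}

lemma min_one_div_mul_rpow_nonneg (ha : 0 ≤ a) (hu : 0 ≤ u) :
    0 ≤ min 1 (a / u) * u ^ (α - 1) :=
  mul_nonneg (le_min zero_le_one (by positivity)) (by positivity)

lemma min_one_div_mul_rpow_le (ha : 0 < a) (hu : 0 < u) (hα₀ : 0 ≤ α) (hα₁ : α ≤ 1) :
    min 1 (a / u) * u ^ (α - 1) ≤ a ^ α / u := by
  calc min 1 (a / u) * u ^ (α - 1) ≤ (a / u) ^ α * u ^ (α - 1) := by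
        gcongr
        exact min_one_le_rpow_s9 (by positivity) hα₀ hα₁
    _ = a ^ α / u := by
        rw [Real.div_rpow ha.le hu.le, Real.rpow_sub_one hu.ne']
        field_simp

lemma min_one_div_mul_rpow_of_le (hu : 0 < u) (hua : u ≤ a) :
    min 1 (a / u) * u ^ (α - 1) = u ^ (α - 1) := by
  rw [min_eq_left ((one_le_div hu).2 hua), one_mul]

lemma min_one_div_mul_rpow_of_ge (hu : 0 < u) (hau : a ≤ u) :
    min 1 (a / u) * u ^ (α - 1) = a * u ^ (α - 2) := by
  rw [min_eq_right ((div_le_one hu).2 hau), show α - 1 = α - 2 + 1 by ring,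
    Real.rpow_add_one hu.ne']
  field_simp

lemma integrableOn_min_one_div_mul_rpow_Ioi (ha : 0 < a) (hα₀ : 0 < α) (hα₁ : α < 1) :
    IntegrableOn (fun u ↦ min 1 (a / u) * u ^ (α - 1)) (Ioi 0) := by
  rw [← Ioc_union_Ioi_eq_Ioi ha.le]
  refine IntegrableOn.union ?_ ?_
  · refine IntegrableOn.congr_fun ?_
      (fun u hu ↦ (min_one_div_mul_rpow_of_le hu.1 hu.2).symm) measurableSet_Ioc
    exact (intervalIntegrable_iff_integrableOn_Ioc_of_le ha.le).1
      (intervalIntegral.intervalIntegrable_rpow' (by linarith))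
  · refine IntegrableOn.congr_fun ?_
      (fun u hu ↦ (min_one_div_mul_rpow_of_ge (ha.trans hu) (le_of_lt hu)).symm)
      measurableSet_Ioi
    exact (integrableOn_Ioi_rpow_of_lt (by linarith) ha).const_mul a

lemma integral_min_one_div_mul_rpow_Ioi (ha : 0 < a) (hα₀ : 0 < α) (hα₁ : α < 1) :
    ∫ u in Ioi 0, min 1 (a / u) * u ^ (α - 1) = a ^ α * (1 / α + 1 / (1 - α)) := by
  have hint := integrableOn_min_one_div_mul_rpow_Ioi ha hα₀ hα₁
  rw [← Ioc_union_Ioi_eq_Ioi ha.le] at hint ⊢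
  rw [setIntegral_union Ioc_disjoint_Ioi_same measurableSet_Ioi
      (hint.mono_set subset_union_left) (hint.mono_set subset_union_right),
    setIntegral_congr_fun measurableSet_Ioc (fun u hu ↦ min_one_div_mul_rpow_of_le hu.1 hu.2),
    setIntegral_congr_fun measurableSet_Ioi
      (fun u hu ↦ min_one_div_mul_rpow_of_ge (ha.trans hu) (le_of_lt hu)),
    ← intervalIntegral.integral_of_le ha.le, integral_rpow (Or.inl (by linarith)),
    integral_const_mul, integral_Ioi_rpow_of_lt (by linarith) ha,
    Real.zero_rpow (by linarith)]
  have hpow : a ^ (α - 2 + 1) = a ^ α / a := by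
    rw [show α - 2 + 1 = α - 1 by ring, Real.rpow_sub_one ha.ne']
  rw [hpow, show α - 1 + 1 = α by ring, show α - 2 + 1 = -(1 - α) by ring]
  field_simp
  ring

lemma min_one_div_sub_mul_rpow_mul_rpow_le (ha : 0 < a) (hτ : τ ∈ Ioo 0 s) (hα₀ : 0 ≤ α)
    (hα₁ : α ≤ 1) (hγ : γ ≤ 0) :
    min 1 (a / (s - τ)) * (s - τ) ^ (α - 1) * τ ^ γ ≤
      2 * a ^ α / s * τ ^ γ + (s / 2) ^ γ * (min 1 (a / (s - τ)) * (s - τ) ^ (α - 1)) := by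
  obtain ⟨hτ₀, hτs⟩ := hτ
  set k := min 1 (a / (s - τ)) * (s - τ) ^ (α - 1)
  have hk : 0 ≤ k := min_one_div_mul_rpow_nonneg ha.le (sub_pos.2 hτs).le
  have hs : 0 < s := hτ₀.trans hτs
  rcases le_or_gt τ (s / 2) with hτ | hτ
  · have hk_le : k ≤ 2 * a ^ α / s :=
      calc k ≤ a ^ α / (s - τ) := min_one_div_mul_rpow_le ha (by linarith) hα₀ hα₁
        _ ≤ a ^ α / (s / 2) :=
          div_le_div_of_nonneg_left (by positivity) (by positivity) (by linarith)
        _ = 2 * a ^ α / s := by ring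
    exact le_add_of_le_of_nonneg (by gcongr) (by positivity)
  · have : τ ^ γ ≤ (s / 2) ^ γ := Real.rpow_le_rpow_of_nonpos (by linarith) hτ.le hγ
    refine le_add_of_nonneg_of_le (by positivity) ?_
    rw [mul_comm]
    gcongr

lemma setIntegral_min_one_div_sub_mul_rpow_mul_rpow_le (ha : 0 < a) (hs : 0 < s) (hα₀ : 0 < α)
    (hα₁ : α < 1) (hγ₀ : -1 < γ) (hγ₁ : γ ≤ 0) :
    ∫ τ in Ioo 0 s, min 1 (a / (s - τ)) * (s - τ) ^ (α - 1) * τ ^ γ ≤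
      (2 / (γ + 1) + 2 ^ (-γ) * (1 / α + 1 / (1 - α))) * a ^ α * s ^ γ := by
  set k : ℝ → ℝ := fun u ↦ min 1 (a / u) * u ^ (α - 1)
  have hk_int : IntegrableOn k (Ioi 0) := integrableOn_min_one_div_mul_rpow_Ioi ha hα₀ hα₁
  have hk_nonneg : ∀ u ∈ Ioi (0 : ℝ), 0 ≤ k u := fun u hu ↦
    min_one_div_mul_rpow_nonneg ha.le (le_of_lt hu)
  have hpow_int : IntegrableOn (fun τ : ℝ ↦ τ ^ γ) (Ioo 0 s) :=
    (intervalIntegrable_iff_integrableOn_Ioo_of_le hs.le).1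
      (intervalIntegral.intervalIntegrable_rpow' hγ₀)
  have hk_int' : IntegrableOn (fun τ ↦ k (s - τ)) (Ioo 0 s) :=
    IntegrableOn.comp_sub_left_Ioo hs.le (hk_int.mono_set Ioo_subset_Ioi_self)
  calc ∫ τ in Ioo 0 s, k (s - τ) * τ ^ γ
      ≤ ∫ τ in Ioo 0 s, (2 * a ^ α / s * τ ^ γ + (s / 2) ^ γ * k (s - τ)) := by
        refine integral_mono_of_nonneg ?_ ((hpow_int.const_mul _).add (hk_int'.const_mul _)) ?_
        · filter_upwards [ae_restrict_mem measurableSet_Ioo] with τ hτ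
          exact mul_nonneg (hk_nonneg _ (sub_pos.2 hτ.2)) (Real.rpow_nonneg hτ.1.le _)
        · filter_upwards [ae_restrict_mem measurableSet_Ioo] with τ hτ
          exact min_one_div_sub_mul_rpow_mul_rpow_le ha hτ hα₀.le hα₁.le hγ₁
    _ = 2 * a ^ α / s * (∫ τ in Ioo 0 s, τ ^ γ) + (s / 2) ^ γ * ∫ u in Ioo 0 s, k u := by
        rw [integral_add (hpow_int.const_mul _) (hk_int'.const_mul _), integral_const_mul,
          integral_const_mul, setIntegral_Ioo_comp_sub_left k hs.le]
    _ ≤ 2 * a ^ α / s * (s ^ (γ + 1) / (γ + 1))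
          + (s / 2) ^ γ * (a ^ α * (1 / α + 1 / (1 - α))) := by
        rw [setIntegral_Ioo_rpow hγ₀ hs.le, ← integral_min_one_div_mul_rpow_Ioi ha hα₀ hα₁]
        gcongr
        · exact (ae_restrict_iff' measurableSet_Ioi).2 (Filter.Eventually.of_forall hk_nonneg)
        · exact Ioo_subset_Ioi_self
    _ = (2 / (γ + 1) + 2 ^ (-γ) * (1 / α + 1 / (1 - α))) * a ^ α * s ^ γ := by
        rw [Real.rpow_add_one hs.ne', Real.div_rpow hs.le zero_le_two, Real.rpow_neg zero_le_two]
        field_simp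

end Kernel

/-- For `σ, α ∈ (0,1)` with `σ + α < 1` there is `C > 0` (depending only on `σ, α`) such
that for all `s > 0` and `a > 0`,
`∫₀^s min{1, a/(s−τ)} (s−τ)^{α−1} τ^{−σ−α} dτ ≤ C a^α s^{−σ−α}`. -/
theorem min_kernel_time_integral_bound (σ α : ℝ) (hσ : 0 < σ) (hα : 0 < α)
    (hσα : σ + α < 1) :
    ∃ C : ℝ, 0 < C ∧ ∀ s a : ℝ, 0 < s → 0 < a →
      (∫ τ in Set.Ioo (0 : ℝ) s,
          min 1 (a / (s - τ)) * (s - τ) ^ (α - 1) * τ ^ (-σ - α))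
        ≤ C * a ^ α * s ^ (-σ - α) := by
  refine ⟨_, ?_, fun s a hs ha ↦ setIntegral_min_one_div_sub_mul_rpow_mul_rpow_le ha hs hα
    (by linarith) (by linarith) (by linarith)⟩
  have h₁ : 0 < -σ - α + 1 := by linarith
  have h₂ : 0 < 1 - α := by linarith
  positivity
end
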